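/- arXiv:math/0508478 — 2 statements merged into one kernel-verified Lean document; each statement's English description precedes it below -/
import Mathlib

section
/- There are exactly 102 F3-admissible tuples (r, a, δφ, δF, δφF). (These tuples are the complete invariants labelling the connected components of moduli of positive real non-singular curves A ∈ |−2K_{F₃}|, equivalently of real K3 surfaces with non-symplectic involution of type (3,1,1).) -/
/-- The invariants `(r, a, δφ, δF, δφF)` of the paper, with `r, a` integers and
`δφ, δF, δφF ∈ {0,1}`, satisfying conditions 0.1--0.7 and I.1--I.8 of the
`𝔽₃` case. -/
def F3Admissible : ℤ × ℤ × ℤ × ℤ × ℤ → Prop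
  | (r, a, dphi, dF, dphiF) =>
    (dphi = 0 ∨ dphi = 1) ∧ (dF = 0 ∨ dF = 1) ∧ (dphiF = 0 ∨ dphiF = 1) ∧
    -- 0.1
    (1 ≤ r ∧ r ≤ 18) ∧ (0 ≤ a ∧ a ≤ r ∧ a ≤ 20 - r) ∧
    -- 0.2
    (r + a ≡ 0 [ZMOD 2]) ∧ (dphi = 0 → r ≡ 2 [ZMOD 4]) ∧
    -- 0.3
    (a = 0 → dphi = 0 ∧ r ≡ 2 [ZMOD 8]) ∧
    -- 0.4
    (a = 1 → (r ≡ 1 [ZMOD 8] ∨ r ≡ 3 [ZMOD 8])) ∧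
    -- 0.5
    (a = 2 ∧ r ≡ 6 [ZMOD 8] → dphi = 0) ∧
    -- 0.6
    (a = r ∧ dphi = 0 → r ≡ 2 [ZMOD 8]) ∧
    -- 0.7
    (a = 20 - r ∧ dphi = 0 → r ≡ 2 [ZMOD 8]) ∧
    -- I.1
    (dF = 0 → dphi = 1) ∧
    -- I.2
    (dphiF = 0 → dF = 0 ∧ dphi = 1 ∧ r ≡ 1 [ZMOD 4]) ∧
    -- I.3
    (a = 20 - r → dF = 0) ∧
    -- I.4
    (a = 20 - r ∧ dphiF = 0 → r ≡ 1 [ZMOD 8]) ∧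
    -- I.5
    (a = 0 → dF = 1) ∧
    -- I.6
    (a = 1 ∧ dF = 0 → dphiF = 0 ∧ r ≡ 1 [ZMOD 8]) ∧
    -- I.7
    (a = 2 ∧ dF = 0 → (r ≡ 0 [ZMOD 8] ∨ r ≡ 2 [ZMOD 8])) ∧
    -- I.8
    (a = 3 ∧ dF = 0 ∧ r ≡ 5 [ZMOD 8] → dphiF = 0)

instance : DecidablePred F3Admissible := fun
  | (_, _, _, _, _) => by unfold F3Admissible; infer_instance

theorem Set.ncard_setOf_eq_card_filter {α : Type*} {p : α → Prop} [DecidablePred p]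
    (s : Finset α) (hs : ∀ x, p x → x ∈ s) : {x | p x}.ncard = (s.filter p).card := by
  rw [← Set.ncard_coe_finset, Finset.coe_filter]
  congr 1
  ext x
  exact ⟨fun hx => ⟨hs x hx, hx⟩, And.right⟩

noncomputable def F3Box : Finset (ℤ × ℤ × ℤ × ℤ × ℤ) :=
  Finset.Icc 1 18 ×ˢ Finset.Icc 0 10 ×ˢ {0, 1} ×ˢ {0, 1} ×ˢ {0, 1}

theorem F3Admissible.mem_F3Box {t : ℤ × ℤ × ℤ × ℤ × ℤ} (ht : F3Admissible t) : t ∈ F3Box := by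
  obtain ⟨r, a, dphi, dF, dphiF⟩ := t
  obtain ⟨hdphi, hdF, hdphiF, hr, ha, -⟩ := ht
  simp only [F3Box, Finset.mem_product, Finset.mem_Icc, Finset.mem_insert, Finset.mem_singleton]
  exact ⟨hr, ⟨ha.1, by omega⟩, hdphi, hdF, hdphiF⟩

/-- There are exactly 102 `𝔽₃`-admissible tuples `(r, a, δφ, δF, δφF)`:
these label the connected components of moduli of positive real non-singular
curves `A ∈ |-2K_{𝔽₃}|`, equivalently of real K3 surfaces with non-symplectic
involution of type `(3,1,1)`. -/
theorem card_F3Admissible :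
    Set.ncard {t : ℤ × ℤ × ℤ × ℤ × ℤ | F3Admissible t} = 102 := by
  rw [Set.ncard_setOf_eq_card_filter F3Box fun _ => F3Admissible.mem_F3Box]
  set_option maxRecDepth 100000 in decide
end

section
/- The map T defined by T(r, a, δφ, δF, δφF) = (19 − r, a + 2δF − 1, δφF, 1 − δF, δφ) sends every F3-admissible tuple to an F3-admissible tuple, satisfies T ∘ T = id on F3-admissible tuples, and has no fixed point among F3-admissible tuples. (T encodes the passage from an anti-holomorphic involution φ to the related anti-holomorphic involution φ̃ = τφ on the double-covering K3 surface, via the relations r(φ)+r(φ̃)=19, a(φ)+δF(φ)=a(φ̃)+δF(φ̃), δF(φ)+δF(φ̃)=1, δ_{φ̃}=δ_{φF}, δ_{φ̃F}=δ_φ.) -/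
/-- The map `T(r, a, δφ, δF, δφF) = (19 − r, a + 2δF − 1, δφF, 1 − δF, δφ)`
encoding the passage from `φ` to the related involution `φ̃ = τφ`. -/
def F3Related : ℤ × ℤ × ℤ × ℤ × ℤ → ℤ × ℤ × ℤ × ℤ × ℤ
  | (r, a, dphi, dF, dphiF) => (19 - r, a + 2 * dF - 1, dphiF, 1 - dF, dphi)

/-- The map `T` sends every `𝔽₃`-admissible tuple to an `𝔽₃`-admissible tuple,
is an involution on `𝔽₃`-admissible tuples, and has no fixed point among them. -/
theorem F3Related_involution :
    ∀ t : ℤ × ℤ × ℤ × ℤ × ℤ, F3Admissible t →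
      F3Admissible (F3Related t) ∧ F3Related (F3Related t) = t ∧ F3Related t ≠ t := by
  rintro ⟨r, a, dphi, dF, dphiF⟩ h
  simp only [F3Admissible, F3Related, Int.ModEq, Prod.mk.injEq, ne_eq] at h ⊢
  obtain ⟨h1, h2, h3, ⟨hr1, hr2⟩, ⟨ha0, har, ha20⟩, hpar, hm07, h03, h04, h05, h06, h07,
    hI1, hI2, hI3, hI4, hI5, hI6, hI7, hI8⟩ := h
  refine ⟨⟨h3, ?_, h1, ?_, ?_, ?_, ?_, ?_, ?_, ?_, ?_, ?_, ?_, ?_, ?_, ?_, ?_, ?_, ?_, ?_⟩,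
    ?_, ?_⟩
  · clear * - h2; omega
  · clear * - hr1 hr2; omega
  · clear * - h2 ha0 har ha20 hI3 hI5 hpar; omega
  · clear * - hpar h2; omega
  · clear * - hI2 h2; omega
  · clear * - h2 ha0 hI6; omega
  · clear * - h2 ha0 hI7 h03; omega
  · clear * - h2 hI8 h04 h3; omega
  · clear * - h2 hI2 hI4; omega
  · clear * - h2 har hI2; omega
  · clear * - h2 h3 hI2; omega
  · clear * - h1 h2 h3 hI1 hI2 hm07; omega
  · clear * - h2 har; omega
  · clear * - h2 har h06; omega
  · clear * - h2 ha0; omega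
  · clear * - h2 h03; omega
  · clear * - h2 h04; omega
  · clear * - h2 h05; omega
  · exact ⟨by omega, by omega, trivial, by omega, trivial⟩
  · clear * - hr1 hr2; intro heq; omega
end
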